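/- For every real α with α ∉ [−1, 1], there exist a finite set V, a symmetric submodular function f : 2^V → ℝ, and an α-ordering (v_1, …, v_n) of V with respect to f such that (v_{n−1}, v_n) is not a contractible pair with respect to f. -/
import Mathlib


open Finset

def Submodular {V : Type*} [DecidableEq V] [Fintype V] (f : Finset V → ℝ) : Prop :=
  ∀ X Y : Finset V, f X + f Y ≥ f (X ∪ Y) + f (X ∩ Y)

def prefSet {V : Type*} [DecidableEq V] {n : ℕ} (v : Fin n → V) (i : Fin n) : Finset V :=
  (Finset.univ.filter (fun k : Fin n => k < i)).image v

def IsAlphaOrdering {V : Type*} [DecidableEq V] {n : ℕ} (α : ℝ)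
    (f : Finset V → ℝ) (v : Fin n → V) : Prop :=
  ∀ i j : Fin n, i ≤ j →
    f (insert (v i) (prefSet v i)) + α * f {v i} ≤
      f (insert (v j) (prefSet v i)) + α * f {v j}

def ContractiblePair {V : Type*} [DecidableEq V] [Fintype V]
    (f : Finset V → ℝ) (u w : V) : Prop :=
  ∀ X : Finset V, X ⊂ Finset.univ → (X ∩ ({u, w} : Finset V)).card = 1 →
    Finset.univ.inf' ⟨u, Finset.mem_univ u⟩ (fun x => f {x}) ≤ f X

/-- number of edges among {0-3, 1-2} split by `X`. -/
def cA (X : Finset (Fin 4)) : ℤ :=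
  (if ((0 : Fin 4) ∈ X ↔ (3 : Fin 4) ∈ X) then 0 else 1)
  + (if ((1 : Fin 4) ∈ X ↔ (2 : Fin 4) ∈ X) then 0 else 1)

/-- indicator that the edge 2-3 is split by `X`. -/
def cB (X : Finset (Fin 4)) : ℤ :=
  if ((2 : Fin 4) ∈ X ↔ (3 : Fin 4) ∈ X) then 0 else 1

/-- indicator that the edge 0-1 is split by `X`. -/
def cC (X : Finset (Fin 4)) : ℤ :=
  if ((0 : Fin 4) ∈ X ↔ (1 : Fin 4) ∈ X) then 0 else 1

def idv : Fin 4 → Fin 4 := fun i => i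

lemma symA : ∀ X : Finset (Fin 4), cA X = cA Xᶜ := by decide
lemma symB : ∀ X : Finset (Fin 4), cB X = cB Xᶜ := by decide
lemma symC : ∀ X : Finset (Fin 4), cC X = cC Xᶜ := by decide

lemma subA : ∀ X Y : Finset (Fin 4), cA (X ∪ Y) + cA (X ∩ Y) ≤ cA X + cA Y := by decide
lemma subB : ∀ X Y : Finset (Fin 4), cB (X ∪ Y) + cB (X ∩ Y) ≤ cB X + cB Y := by decide
lemma subC : ∀ X Y : Finset (Fin 4), cC (X ∪ Y) + cC (X ∩ Y) ≤ cC X + cC Y := by decide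

lemma singA : ∀ x : Fin 4, cA {x} = 1 := by decide
lemma singB_nonneg : ∀ x : Fin 4, 0 ≤ cB {x} := by decide
lemma singC_nonneg : ∀ x : Fin 4, 0 ≤ cC {x} := by decide

lemma pos1 : ∀ i j : Fin 4, i ≤ j →
    cA (insert (idv i) (prefSet idv i)) - cA (insert (idv j) (prefSet idv i))
      + 2 * (cB {idv i} - cB {idv j}) ≤ 0 := by decide

lemma pos2 : ∀ i j : Fin 4, i ≤ j →
    2 * (cA (insert (idv i) (prefSet idv i)) - cA (insert (idv j) (prefSet idv i)))
      + 2 * (cB (insert (idv i) (prefSet idv i)) - cB (insert (idv j) (prefSet idv i)))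
      + 2 * (cB {idv i} - cB {idv j}) ≤ 0 := by decide

lemma neg1 : ∀ i j : Fin 4, i ≤ j →
    0 ≤ 2 * (cC {idv i} - cC {idv j})
      - (cA (insert (idv i) (prefSet idv i)) - cA (insert (idv j) (prefSet idv i))) := by decide

lemma neg2 : ∀ i j : Fin 4, i ≤ j →
    (cA (insert (idv i) (prefSet idv i)) - cA (insert (idv j) (prefSet idv i)))
      + (cC (insert (idv i) (prefSet idv i)) - cC (insert (idv j) (prefSet idv i)))
      - (cC {idv i} - cC {idv j}) ≤ 0 := by decide

lemma witness_ssubset : ({0, 3} : Finset (Fin 4)) ⊂ Finset.univ := by decide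

lemma witness_card :
    ((({0, 3} : Finset (Fin 4)) ∩
      ({idv ⟨4 - 2, by omega⟩, idv ⟨4 - 1, by omega⟩} : Finset (Fin 4))).card) = 1 := by decide

lemma witA : cA ({0, 3} : Finset (Fin 4)) = 0 := by decide
lemma witB : cB ({0, 3} : Finset (Fin 4)) = 1 := by decide
lemma witC : cC ({0, 3} : Finset (Fin 4)) = 1 := by decide

/-- Proposition 6.1: for any `α ∉ [-1, 1]` there are a finite ground set, a symmetric
submodular function `f`, and an `α`-ordering of the ground set with respect to `f`
whose last two elements do not form a contractible pair. -/
theorem stmt_8 (α : ℝ) (hα : α ∉ Set.Icc (-1 : ℝ) 1) :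
    ∃ (n : ℕ) (hn : 2 ≤ n) (f : Finset (Fin n) → ℝ) (v : Fin n → Fin n),
      (∀ X : Finset (Fin n), f X = f Xᶜ) ∧ Submodular f ∧
      Function.Bijective v ∧ IsAlphaOrdering α f v ∧
      ¬ ContractiblePair f (v ⟨n - 2, by omega⟩) (v ⟨n - 1, by omega⟩) := by
  simp only [Set.mem_Icc, not_and_or, not_le] at hα
  rcases hα with hneg | hpos
  · -- case α < -1 : weights t = (1-α)/2 on edges 0-3, 1-2 and weight 1 on edge 0-1
    set t : ℝ := (1 - α) / 2 with ht
    have ht1 : 1 < t := by rw [ht]; linarith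
    have ht0 : (0 : ℝ) ≤ t := by linarith
    refine ⟨4, by norm_num, fun X => t * (cA X : ℝ) + (cC X : ℝ), idv, ?_, ?_, ?_, ?_, ?_⟩
    · intro X
      simp only [symA X, symC X]
    · intro X Y
      have hA : ((cA (X ∪ Y) + cA (X ∩ Y) : ℤ) : ℝ) ≤ ((cA X + cA Y : ℤ) : ℝ) := by
        exact_mod_cast subA X Y
      have hC : ((cC (X ∪ Y) + cC (X ∩ Y) : ℤ) : ℝ) ≤ ((cC X + cC Y : ℤ) : ℝ) := by
        exact_mod_cast subC X Y
      push_cast at hA hC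
      have := mul_le_mul_of_nonneg_left hA ht0
      simp only [ge_iff_le]
      nlinarith
    · exact Function.bijective_id
    · intro i j hij
      have h1 : (0 : ℝ) ≤ 2 * (((cC {idv i} : ℤ) : ℝ) - ((cC {idv j} : ℤ) : ℝ))
          - (((cA (insert (idv i) (prefSet idv i)) : ℤ) : ℝ)
          - ((cA (insert (idv j) (prefSet idv i)) : ℤ) : ℝ)) := by
        exact_mod_cast neg1 i j hij
      have h2 : (((cA (insert (idv i) (prefSet idv i)) : ℤ) : ℝ)
          - ((cA (insert (idv j) (prefSet idv i)) : ℤ) : ℝ))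
          + (((cC (insert (idv i) (prefSet idv i)) : ℤ) : ℝ)
          - ((cC (insert (idv j) (prefSet idv i)) : ℤ) : ℝ))
          - (((cC {idv i} : ℤ) : ℝ) - ((cC {idv j} : ℤ) : ℝ)) ≤ 0 := by
        exact_mod_cast neg2 i j hij
      have e1 : ((cA {idv i} : ℤ) : ℝ) = 1 := by exact_mod_cast singA (idv i)
      have e2 : ((cA {idv j} : ℤ) : ℝ) = 1 := by exact_mod_cast singA (idv j)
      simp only [e1, e2]
      have hprod : (α + 1) * (2 * (((cC {idv i} : ℤ) : ℝ) - ((cC {idv j} : ℤ) : ℝ))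
          - (((cA (insert (idv i) (prefSet idv i)) : ℤ) : ℝ)
          - ((cA (insert (idv j) (prefSet idv i)) : ℤ) : ℝ))) ≤ 0 :=
        mul_nonpos_of_nonpos_of_nonneg (by linarith) h1
      rw [ht]
      nlinarith [hprod, h2]
    · intro h
      have hle := h ({0, 3} : Finset (Fin 4)) witness_ssubset witness_card
      beta_reduce at hle
      have hf : t * ((cA ({0, 3} : Finset (Fin 4)) : ℤ) : ℝ)
          + ((cC ({0, 3} : Finset (Fin 4)) : ℤ) : ℝ) = 1 := by
        rw [witA, witC]; push_cast; ring
      rw [hf] at hle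
      have hinf : t ≤ Finset.univ.inf'
          ⟨idv ⟨4 - 2, by omega⟩, Finset.mem_univ _⟩
          (fun x : Fin 4 => t * ((cA {x} : ℤ) : ℝ) + ((cC {x} : ℤ) : ℝ)) := by
        apply Finset.le_inf'
        intro x _
        have e1 : ((cA {x} : ℤ) : ℝ) = 1 := by exact_mod_cast singA x
        have e2 : (0 : ℝ) ≤ ((cC {x} : ℤ) : ℝ) := by exact_mod_cast singC_nonneg x
        rw [e1]; linarith
      linarith
  · -- case 1 < α : weights t = (1+α)/2 on edges 0-3, 1-2 and weight 1 on edge 2-3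
    set t : ℝ := (1 + α) / 2 with ht
    have ht1 : 1 < t := by rw [ht]; linarith
    have ht0 : (0 : ℝ) ≤ t := by linarith
    refine ⟨4, by norm_num, fun X => t * (cA X : ℝ) + (cB X : ℝ), idv, ?_, ?_, ?_, ?_, ?_⟩
    · intro X
      simp only [symA X, symB X]
    · intro X Y
      have hA : ((cA (X ∪ Y) + cA (X ∩ Y) : ℤ) : ℝ) ≤ ((cA X + cA Y : ℤ) : ℝ) := by
        exact_mod_cast subA X Y
      have hB : ((cB (X ∪ Y) + cB (X ∩ Y) : ℤ) : ℝ) ≤ ((cB X + cB Y : ℤ) : ℝ) := by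
        exact_mod_cast subB X Y
      push_cast at hA hB
      have := mul_le_mul_of_nonneg_left hA ht0
      simp only [ge_iff_le]
      nlinarith
    · exact Function.bijective_id
    · intro i j hij
      have h1 : ((cA (insert (idv i) (prefSet idv i)) : ℤ) : ℝ)
          - ((cA (insert (idv j) (prefSet idv i)) : ℤ) : ℝ)
          + 2 * (((cB {idv i} : ℤ) : ℝ) - ((cB {idv j} : ℤ) : ℝ)) ≤ 0 := by
        exact_mod_cast pos1 i j hij
      have h2 : 2 * (((cA (insert (idv i) (prefSet idv i)) : ℤ) : ℝ)
          - ((cA (insert (idv j) (prefSet idv i)) : ℤ) : ℝ))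
          + 2 * (((cB (insert (idv i) (prefSet idv i)) : ℤ) : ℝ)
          - ((cB (insert (idv j) (prefSet idv i)) : ℤ) : ℝ))
          + 2 * (((cB {idv i} : ℤ) : ℝ) - ((cB {idv j} : ℤ) : ℝ)) ≤ 0 := by
        exact_mod_cast pos2 i j hij
      have e1 : ((cA {idv i} : ℤ) : ℝ) = 1 := by exact_mod_cast singA (idv i)
      have e2 : ((cA {idv j} : ℤ) : ℝ) = 1 := by exact_mod_cast singA (idv j)
      simp only [e1, e2]
      have hprod : (α - 1) * (((cA (insert (idv i) (prefSet idv i)) : ℤ) : ℝ)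
          - ((cA (insert (idv j) (prefSet idv i)) : ℤ) : ℝ)
          + 2 * (((cB {idv i} : ℤ) : ℝ) - ((cB {idv j} : ℤ) : ℝ))) ≤ 0 :=
        mul_nonpos_of_nonneg_of_nonpos (by linarith) h1
      rw [ht]
      nlinarith [hprod, h2]
    · intro h
      have hle := h ({0, 3} : Finset (Fin 4)) witness_ssubset witness_card
      beta_reduce at hle
      have hf : t * ((cA ({0, 3} : Finset (Fin 4)) : ℤ) : ℝ)
          + ((cB ({0, 3} : Finset (Fin 4)) : ℤ) : ℝ) = 1 := by
        rw [witA, witB]; push_cast; ring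
      rw [hf] at hle
      have hinf : t ≤ Finset.univ.inf'
          ⟨idv ⟨4 - 2, by omega⟩, Finset.mem_univ _⟩
          (fun x : Fin 4 => t * ((cA {x} : ℤ) : ℝ) + ((cB {x} : ℤ) : ℝ)) := by
        apply Finset.le_inf'
        intro x _
        have e1 : ((cA {x} : ℤ) : ℝ) = 1 := by exact_mod_cast singA x
        have e2 : (0 : ℝ) ≤ ((cB {x} : ℤ) : ℝ) := by exact_mod_cast singB_nonneg x
        rw [e1]; linarith
      linarith
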